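/- arXiv:1705.10440 — 2 statements merged into one kernel-verified Lean document; each statement's English description precedes it below -/
import Mathlib

section
/- Let Z₁,…,Z_M be i.i.d. exponential random variables with mean 1 and let D be a strictly positive random variable independent of (Z₁,…,Z_M) with Laplace transform φ(t) = E[e^{−Dt}]. Define U_m := φ(Z_m/D). Then each U_m is uniformly distributed on (0,1). -/
/-! Since `D > 0`, the Laplace transform `φ` is continuous and strictly decreasing on `[0, ∞)`,
from `φ 0 = 1` down to `0`, so each `u ∈ (0,1)` is `φ c` for exactly one `c > 0` and
`{φ (Z / D) ≤ u} = {c D ≤ Z}` almost surely. Conditioning on `D`, independence and the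
exponential tail of `Z` give `P (c D ≤ Z) = E[exp (-c D)] = φ c = u`. -/

open MeasureTheory ProbabilityTheory Filter Set Topology

lemma norm_exp_neg_mul_le_one {d t : ℝ} (hd : 0 ≤ d) (ht : 0 ≤ t) :
    ‖Real.exp (-(d * t))‖ ≤ 1 := by
  rw [Real.norm_eq_abs, abs_of_pos (Real.exp_pos _), Real.exp_le_one_iff, neg_nonpos]
  exact mul_nonneg hd ht

lemma exists_pos_eq_of_continuousOn_Ici {f : ℝ → ℝ} (hf : ContinuousOn f (Ici 0))
    (hlim : Tendsto f atTop (𝓝 0)) {u : ℝ} (hu : u ∈ Ioo 0 (f 0)) : ∃ c > 0, f c = u := by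
  obtain ⟨T, hT, hfT⟩ := ((eventually_ge_atTop 0).and (hlim.eventually_lt_const hu.1)).exists
  obtain ⟨c, hc, hfc⟩ := intermediate_value_Ioo' hT (hf.mono Icc_subset_Ici_self) ⟨hfT, hu.2⟩
  exact ⟨c, hc.1, hfc⟩

section

variable {α : Type*} [MeasurableSpace α] {μ : Measure α}

lemma integral_lt_integral_of_forall_lt [NeZero μ] {f g : α → ℝ} (hf : Integrable f μ)
    (hg : Integrable g μ) (hfg : ∀ x, f x < g x) : ∫ x, f x ∂μ < ∫ x, g x ∂μ := by
  rw [← sub_pos, ← integral_sub hg hf,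
    integral_pos_iff_support_of_nonneg (fun x ↦ (sub_pos.2 (hfg x)).le) (hg.sub hf)]
  have hsupp : Function.support (fun x ↦ g x - f x) = univ :=
    eq_univ_of_forall fun x ↦ (sub_pos.2 (hfg x)).ne'
  simp [hsupp, NeZero.ne]

end

section LaplaceTransform

variable {Ω : Type*} [MeasurableSpace Ω] {μ : Measure Ω} [IsFiniteMeasure μ] {D : Ω → ℝ}

lemma integrable_exp_neg_mul (hDm : Measurable D) (hD : ∀ ω, 0 ≤ D ω) {t : ℝ} (ht : 0 ≤ t) :
    Integrable (fun ω ↦ Real.exp (-(D ω * t))) μ :=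
  (integrable_const 1).mono' (by fun_prop)
    (Eventually.of_forall fun ω ↦ norm_exp_neg_mul_le_one (hD ω) ht)

lemma continuousOn_integral_exp_neg_mul (hDm : Measurable D) (hD : ∀ ω, 0 ≤ D ω) :
    ContinuousOn (fun t ↦ ∫ ω, Real.exp (-(D ω * t)) ∂μ) (Ici 0) :=
  continuousOn_of_dominated (bound := fun _ ↦ 1) (fun _ _ ↦ by fun_prop)
    (fun _ ht ↦ Eventually.of_forall fun ω ↦ norm_exp_neg_mul_le_one (hD ω) ht)
    (integrable_const 1) (Eventually.of_forall fun _ ↦ by fun_prop)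

lemma strictAntiOn_integral_exp_neg_mul [NeZero μ] (hDm : Measurable D) (hD : ∀ ω, 0 < D ω) :
    StrictAntiOn (fun t ↦ ∫ ω, Real.exp (-(D ω * t)) ∂μ) (Ici 0) := by
  intro s hs t ht hst
  refine integral_lt_integral_of_forall_lt (integrable_exp_neg_mul hDm (fun ω ↦ (hD ω).le) ht)
    (integrable_exp_neg_mul hDm (fun ω ↦ (hD ω).le) hs) fun ω ↦ ?_
  rw [Real.exp_lt_exp, neg_lt_neg_iff]
  exact mul_lt_mul_of_pos_left hst (hD ω)

lemma tendsto_integral_exp_neg_mul_atTop (hDm : Measurable D) (hD : ∀ ω, 0 < D ω) :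
    Tendsto (fun t ↦ ∫ ω, Real.exp (-(D ω * t)) ∂μ) atTop (𝓝 0) := by
  have hlim : ∀ ω, Tendsto (fun t ↦ Real.exp (-(D ω * t))) atTop (𝓝 0) := fun ω ↦
    Real.tendsto_exp_atBot.comp <| tendsto_neg_atTop_atBot.comp <|
      tendsto_id.const_mul_atTop (hD ω)
  simpa using tendsto_integral_filter_of_dominated_convergence (fun _ ↦ 1)
    (Eventually.of_forall fun _ ↦ by fun_prop)
    ((eventually_ge_atTop 0).mono fun t ht ↦
      Eventually.of_forall fun ω ↦ norm_exp_neg_mul_le_one (hD ω).le ht)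
    (integrable_const 1) (Eventually.of_forall hlim)

end LaplaceTransform

section ExponentialTail

variable {Ω : Type*} [MeasurableSpace Ω] {μ : Measure Ω} [IsFiniteMeasure μ] {Z : Ω → ℝ}

lemma tendsto_measure_lt_nhdsLT (hZm : Measurable Z) (x : ℝ) :
    Tendsto (fun y ↦ μ {ω | y < Z ω}) (𝓝[<] x) (𝓝 (μ {ω | x ≤ Z ω})) := by
  -- continuity from above, read in `ℝᵒᵈ` so that its `𝓝[>]` is our `𝓝[<]`
  have h := tendsto_measure_biInter_gt (μ := μ) (ι := ℝᵒᵈ) (a := OrderDual.toDual x)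
    (s := fun r ↦ {ω | OrderDual.ofDual r < Z ω})
    (fun r _ ↦ (measurableSet_lt measurable_const hZm).nullMeasurableSet)
    (fun i j _ hij ω (hω : OrderDual.ofDual i < Z ω) ↦ lt_of_le_of_lt (α := ℝ) hij hω)
    ⟨OrderDual.toDual (x - 1), OrderDual.toDual_lt_toDual.2 (by linarith), measure_ne_top _ _⟩
  have hset : {ω | x ≤ Z ω} = ⋂ r > OrderDual.toDual x, {ω | OrderDual.ofDual r < Z ω} := by
    ext ω
    simpa using forall_lt_iff_le.symm
  rw [hset]
  exact h

/-- Continuity of the tail `exp (-t)` rules out an atom of `Z` at `x`. -/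
lemma measure_le_eq_exp_neg (hZm : Measurable Z)
    (hZ : ∀ t, 0 ≤ t → μ {ω | t < Z ω} = ENNReal.ofReal (Real.exp (-t))) {x : ℝ} (hx : 0 < x) :
    μ {ω | x ≤ Z ω} = ENNReal.ofReal (Real.exp (-x)) := by
  have htail : Tendsto (fun y ↦ ENNReal.ofReal (Real.exp (-y))) (𝓝[<] x)
      (𝓝 (ENNReal.ofReal (Real.exp (-x)))) :=
    (ENNReal.continuous_ofReal.comp (by fun_prop)).continuousAt.tendsto.mono_left
      nhdsWithin_le_nhds
  refine tendsto_nhds_unique (tendsto_measure_lt_nhdsLT hZm x) (htail.congr' ?_)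
  filter_upwards [Ioo_mem_nhdsLT hx] with y hy
  exact (hZ y hy.1.le).symm

end ExponentialTail

variable {Ω : Type*} [MeasurableSpace Ω] {μ : Measure Ω} [IsFiniteMeasure μ] in
lemma measure_mul_le_eq_integral_exp_neg_mul {D Z : Ω → ℝ} (hDm : Measurable D)
    (hZm : Measurable Z) (hDZ : IndepFun D Z μ) (hD : ∀ ω, 0 < D ω)
    (hZ : ∀ x > 0, μ {ω | x ≤ Z ω} = ENNReal.ofReal (Real.exp (-x))) {c : ℝ} (hc : 0 < c) :
    μ {ω | c * D ω ≤ Z ω} = ENNReal.ofReal (∫ ω, Real.exp (-(D ω * c)) ∂μ) := by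
  set S := {p : ℝ × ℝ | c * p.1 ≤ p.2}
  have hS : MeasurableSet S := measurableSet_le (by fun_prop) measurable_snd
  calc μ {ω | c * D ω ≤ Z ω} = μ.map (fun ω ↦ (D ω, Z ω)) S :=
        (Measure.map_apply (hDm.prodMk hZm) hS).symm
    _ = ((μ.map D).prod (μ.map Z)) S := by
        rw [(indepFun_iff_map_prod_eq_prod_map_map hDm.aemeasurable hZm.aemeasurable).1 hDZ]
    _ = ∫⁻ ω, μ.map Z (Prod.mk (D ω) ⁻¹' S) ∂μ := by
        rw [Measure.prod_apply hS, lintegral_map (measurable_measure_prodMk_left hS) hDm]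
    _ = ∫⁻ ω, ENNReal.ofReal (Real.exp (-(D ω * c))) ∂μ := by
        refine lintegral_congr fun ω ↦ ?_
        change μ.map Z (Ici (c * D ω)) = _
        rw [Measure.map_apply hZm measurableSet_Ici, mul_comm]
        exact hZ _ (mul_pos (hD ω) hc)
    _ = ENNReal.ofReal (∫ ω, Real.exp (-(D ω * c)) ∂μ) :=
        (ofReal_integral_eq_lintegral_ofReal (integrable_exp_neg_mul hDm (fun ω ↦ (hD ω).le) hc.le)
          (Eventually.of_forall fun _ ↦ (Real.exp_pos _).le)).symm

/-- Kimberling construction, marginal uniformity: if `Z₁,…,Z_M` are i.i.d. standard exponential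
random variables, `D > 0` is independent of them with Laplace transform `φ`, and
`U_m := φ(Z_m / D)`, then each `U_m` is uniformly distributed on `(0,1)`. -/
theorem kimberling_marginals_uniform
    {M : ℕ} {Ω : Type*} [MeasurableSpace Ω] (μ : Measure Ω) [IsProbabilityMeasure μ]
    (Z : Fin M → Ω → ℝ) (hZm : ∀ m, Measurable (Z m))
    (D : Ω → ℝ) (hDm : Measurable D) (hDpos : ∀ ω, 0 < D ω)
    (hindep : iIndepFun
      (Fin.cons D Z : Fin (M + 1) → Ω → ℝ) μ)
    (hexp : ∀ m, ∀ t : ℝ, 0 ≤ t → (μ {ω | t < Z m ω}).toReal = Real.exp (-t))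
    (φ : ℝ → ℝ) (hφ : ∀ t : ℝ, 0 ≤ t → φ t = ∫ ω, Real.exp (-(D ω * t)) ∂μ) :
    ∀ m : Fin M, ∀ u ∈ Set.Ioo (0 : ℝ) 1,
      (μ {ω | φ (Z m ω / D ω) ≤ u}).toReal = u := by
  intro m u hu
  have hφ0 : φ 0 = 1 := by simp [hφ 0 le_rfl]
  have hanti : StrictAntiOn φ (Ici 0) :=
    (strictAntiOn_integral_exp_neg_mul hDm hDpos).congr fun t ht ↦ (hφ t ht).symm
  obtain ⟨c, hc, hφc⟩ := exists_pos_eq_of_continuousOn_Ici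
    ((continuousOn_integral_exp_neg_mul hDm fun ω ↦ (hDpos ω).le).congr hφ)
    ((tendsto_integral_exp_neg_mul_atTop hDm hDpos).congr'
      ((eventually_ge_atTop 0).mono fun t ht ↦ (hφ t ht).symm))
    (hφ0 ▸ hu)
  have htail : ∀ t, 0 ≤ t → μ {ω | t < Z m ω} = ENNReal.ofReal (Real.exp (-t)) := fun t ht ↦ by
    rw [← hexp m t ht, ENNReal.ofReal_toReal (measure_ne_top _ _)]
  have hZpos : ∀ᵐ ω ∂μ, 0 < Z m ω :=
    (ae_iff_measure_eq (measurableSet_lt measurable_const (hZm m)).nullMeasurableSet).2 <| by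
      simp [htail 0 le_rfl]
  have hevent : {ω | φ (Z m ω / D ω) ≤ u} =ᵐ[μ] {ω | c * D ω ≤ Z m ω} := by
    refine eventuallyEq_set.2 (hZpos.mono fun ω hω ↦ ?_)
    rw [mem_ofPred_eq, mem_ofPred_eq, ← hφc,
      hanti.le_iff_ge (div_nonneg hω.le (hDpos ω).le) hc.le, le_div_iff₀ (hDpos ω)]
  have hDZ : IndepFun D (Z m) μ := by
    simpa using hindep.indepFun (Fin.succ_ne_zero m).symm
  rw [measure_congr hevent, measure_mul_le_eq_integral_exp_neg_mul hDm (hZm m) hDZ hDpos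
    (fun x hx ↦ measure_le_eq_exp_neg (hZm m) htail hx) hc, ← hφ c hc.le, hφc,
    ENNReal.toReal_ofReal hu.1.le]
end

section
/- Under the Kimberling construction (Z₁,…,Z_M i.i.d. standard exponentials, D > 0 independent with Laplace transform φ, U_m = φ(Z_m/D)), the joint distribution satisfies Pr[U₁ ≤ u₁, …, U_M ≤ u_M] = φ(Σ_{m=1}^M φ⁻¹(u_m)). -/
/-!
Since `φ` is strictly decreasing on `[0, ∞)` and `Z_m > 0` almost surely, `φ(Z_m / D) ≤ u_m`
iff `Z_m ≥ D c_m` with `c_m = φ⁻¹(u_m)`. By independence the joint law of `(D, Z)` is the product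
of the marginals, so conditionally on `D = d` the probability of this event is
`∏ exp(-d c_m) = exp(-d Σ c_m)`, and integrating over the law of `D` gives the Laplace transform
`φ(Σ c_m)`.
-/

open MeasureTheory ProbabilityTheory Filter Set
open scoped ENNReal Topology

theorem tendsto_measure_Ioi_nhdsLT (ν : Measure ℝ) [IsFiniteMeasure ν] (t : ℝ) :
    Tendsto (fun s => ν (Ioi s)) (𝓝[<] t) (𝓝 (ν (Ici t))) := by
  have hInter : ⋂ s : Iio t, Ioi (s : ℝ) = Ici t := by
    ext x
    simp only [mem_iInter, mem_Ioi, mem_Ici, Subtype.forall, mem_Iio]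
    exact ⟨fun h => le_of_forall_lt fun s hs => h s hs, fun h s hs => hs.trans_le h⟩
  rw [← map_coe_Iio_atTop t, tendsto_map'_iff, ← hInter]
  exact tendsto_measure_iInter_atTop (fun _ => measurableSet_Ioi.nullMeasurableSet)
    (fun a b hab => Ioi_subset_Ioi hab) ⟨⟨t - 1, by simp⟩, measure_ne_top _ _⟩

theorem measure_Ici_eq_exp {ν : Measure ℝ} [IsFiniteMeasure ν]
    (h : ∀ t, 0 ≤ t → ν (Ioi t) = ENNReal.ofReal (Real.exp (-t))) {t : ℝ} (ht : 0 < t) :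
    ν (Ici t) = ENNReal.ofReal (Real.exp (-t)) := by
  refine tendsto_nhds_unique (tendsto_measure_Ioi_nhdsLT ν t) ?_
  have hcont : Continuous fun s : ℝ => ENNReal.ofReal (Real.exp (-s)) :=
    ENNReal.continuous_ofReal.comp (by fun_prop)
  refine (hcont.tendsto t).mono_left nhdsWithin_le_nhds |>.congr' ?_
  filter_upwards [Ioo_mem_nhdsLT ht] with s hs using (h s hs.1.le).symm

section Independence

variable {n : ℕ} {Ω β : Type*} [MeasurableSpace Ω] [MeasurableSpace β] {μ : Measure Ω}
  {X : Ω → β} {Y : Fin n → Ω → β}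

theorem ProbabilityTheory.iIndepFun.map_prodMk_eq_prod_pi (hX : Measurable X)
    (hY : ∀ i, Measurable (Y i)) (h : iIndepFun (Fin.cons X Y : Fin (n + 1) → Ω → β) μ) :
    μ.map (fun ω => (X ω, fun i => Y i ω)) = (μ.map X).prod (Measure.pi fun i => μ.map (Y i)) := by
  have := h.isProbabilityMeasure
  have hmeas : ∀ i, Measurable ((Fin.cons X Y : Fin (n + 1) → Ω → β) i) := Fin.cases hX hY
  have := (measurePreserving_piFinSuccAbove
    (fun i => μ.map ((Fin.cons X Y : Fin (n + 1) → Ω → β) i)) 0).map_eq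
  rw [← h.map_fun_eq_pi_map fun i => (hmeas i).aemeasurable,
    Measure.map_map (MeasurableEquiv.measurable _) (measurable_pi_lambda _ hmeas)] at this
  -- `piFinSuccAbove _ 0` applied to `Fin.cons` is definitionally the pair `(X ω, (Y · ω))`.
  exact this

theorem ProbabilityTheory.iIndepFun.measure_forall_mem_eq_lintegral (hX : Measurable X)
    (hY : ∀ i, Measurable (Y i)) (h : iIndepFun (Fin.cons X Y : Fin (n + 1) → Ω → β) μ)
    {A : Fin n → β → Set β} (hA : ∀ i, MeasurableSet {p : β × β | p.2 ∈ A i p.1}) :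
    μ {ω | ∀ i, Y i ω ∈ A i (X ω)} = ∫⁻ x, ∏ i, μ.map (Y i) (A i x) ∂μ.map X := by
  have := h.isProbabilityMeasure
  set T : Set (β × (Fin n → β)) := {p | ∀ i, p.2 i ∈ A i p.1}
  have hT : MeasurableSet T := by
    simp only [T, ofPred_forall]
    exact .iInter fun i =>
      (hA i).preimage (measurable_fst.prodMk ((measurable_pi_apply i).comp measurable_snd))
  have hslice : ∀ x, Prod.mk x ⁻¹' T = univ.pi fun i => A i x := fun x => by ext; simp [T]
  calc μ {ω | ∀ i, Y i ω ∈ A i (X ω)}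
      = μ.map (fun ω => (X ω, fun i => Y i ω)) T :=
        (Measure.map_apply (hX.prodMk (measurable_pi_lambda _ hY)) hT).symm
    _ = _ := by
        simp only [h.map_prodMk_eq_prod_pi hX hY, Measure.prod_apply hT, hslice, Measure.pi_pi]

end Independence

theorem lintegral_map_ofReal_exp_neg_mul {Ω : Type*} [MeasurableSpace Ω] {μ : Measure Ω}
    [IsFiniteMeasure μ] {D : Ω → ℝ} (hD : Measurable D) (hD_nonneg : ∀ ω, 0 ≤ D ω) {s : ℝ}
    (hs : 0 ≤ s) :
    ∫⁻ d, ENNReal.ofReal (Real.exp (-(d * s))) ∂μ.map D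
      = ENNReal.ofReal (∫ ω, Real.exp (-(D ω * s)) ∂μ) := by
  have hint : Integrable (fun ω => Real.exp (-(D ω * s))) μ :=
    (integrable_const 1).mono' (by fun_prop) (.of_forall fun ω => by
      simpa using mul_nonneg (hD_nonneg ω) hs)
  rw [lintegral_map (by fun_prop) hD,
    ofReal_integral_eq_lintegral_ofReal hint (.of_forall fun ω => (Real.exp_pos _).le)]

theorem prod_measure_Ici_mul_eq_exp {M : ℕ} {ν : Fin M → Measure ℝ}
    [∀ m, IsFiniteMeasure (ν m)]
    (hν : ∀ m t, 0 ≤ t → ν m (Ioi t) = ENNReal.ofReal (Real.exp (-t)))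
    {c : Fin M → ℝ} (hc : ∀ m, 0 < c m) {d : ℝ} (hd : 0 < d) :
    ∏ m, ν m (Ici (d * c m)) = ENNReal.ofReal (Real.exp (-(d * ∑ m, c m))) := calc
  _ = ∏ m, ENNReal.ofReal (Real.exp (-(d * c m))) :=
    Finset.prod_congr rfl fun m _ => measure_Ici_eq_exp (hν m) (mul_pos hd (hc m))
  _ = _ := by
    rw [← ENNReal.ofReal_prod_of_nonneg fun m _ => (Real.exp_pos _).le, ← Real.exp_sum,
      Finset.mul_sum, ← Finset.sum_neg_distrib]

section ExponentialTail

variable {Ω : Type*} [MeasurableSpace Ω] {μ : Measure Ω} {Z : Ω → ℝ}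

theorem map_measure_Ioi_eq_exp_of_tail [IsFiniteMeasure μ] (hZ : Measurable Z)
    (h : ∀ t, 0 ≤ t → (μ {ω | t < Z ω}).toReal = Real.exp (-t)) (t : ℝ) (ht : 0 ≤ t) :
    μ.map Z (Ioi t) = ENNReal.ofReal (Real.exp (-t)) := by
  rw [Measure.map_apply hZ measurableSet_Ioi, ← h t ht, ENNReal.ofReal_toReal (measure_ne_top _ _)]
  rfl

theorem ae_pos_of_tail_eq_exp [IsProbabilityMeasure μ] (hZ : Measurable Z)
    (h : ∀ t, 0 ≤ t → (μ {ω | t < Z ω}).toReal = Real.exp (-t)) : ∀ᵐ ω ∂μ, 0 < Z ω := by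
  have h0 := h 0 le_rfl
  rw [neg_zero, Real.exp_zero, ENNReal.toReal_eq_one_iff] at h0
  rw [ae_iff_measure_eq (measurableSet_lt measurable_const hZ).nullMeasurableSet, h0, measure_univ]

end ExponentialTail

theorem kimberling_joint_archimedean_general
    {M : ℕ} {Ω : Type*} [MeasurableSpace Ω] (μ : Measure Ω) [IsProbabilityMeasure μ]
    (Z : Fin M → Ω → ℝ) (hZm : ∀ m, Measurable (Z m))
    (D : Ω → ℝ) (hDm : Measurable D) (hDpos : ∀ ω, 0 < D ω)
    (hindep : iIndepFun
      (Fin.cons D Z : Fin (M + 1) → Ω → ℝ) μ)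
    (hexp : ∀ m, ∀ t : ℝ, 0 ≤ t → (μ {ω | t < Z m ω}).toReal = Real.exp (-t))
    (φ : ℝ → ℝ) (hφ : ∀ t : ℝ, 0 ≤ t → φ t = ∫ ω, Real.exp (-(D ω * t)) ∂μ)
    (hφ0 : φ 0 = 1) (hφanti : StrictAntiOn φ (Set.Ici (0 : ℝ)))
    (φinv : ℝ → ℝ)
    (hφinv_nonneg : ∀ u ∈ Set.Ioo (0 : ℝ) 1, 0 ≤ φinv u)
    (hφinv : ∀ u ∈ Set.Ioo (0 : ℝ) 1, φ (φinv u) = u)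
    (u : Fin M → ℝ) (hu : ∀ m, u m ∈ Set.Ioo (0 : ℝ) 1) :
    (μ {ω | ∀ m : Fin M, φ (Z m ω / D ω) ≤ u m}).toReal
      = φ (∑ m, φinv (u m)) := by
  set c : Fin M → ℝ := fun m => φinv (u m)
  have hc_pos : ∀ m, 0 < c m := fun m =>
    (hφinv_nonneg _ (hu m)).lt_of_ne' fun h0 => (hu m).2.ne <| by
      rw [← hφinv _ (hu m), ← hφ0]; exact congrArg φ h0
  have hs : 0 ≤ ∑ m, c m := Finset.sum_nonneg fun m _ => (hc_pos m).le
  have hevent : {ω | ∀ m, φ (Z m ω / D ω) ≤ u m} =ᵐ[μ] {ω | ∀ m, Z m ω ∈ Ici (D ω * c m)} := by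
    filter_upwards [ae_all_iff.2 fun m => ae_pos_of_tail_eq_exp (hZm m) (hexp m)] with ω hω
    refine propext (forall_congr' fun m => ?_)
    rw [← hφinv _ (hu m), hφanti.le_iff_ge (div_pos (hω m) (hDpos ω)).le (hc_pos m).le,
      le_div_iff₀ (hDpos ω), mul_comm]
    rfl
  rw [measure_congr hevent,
    hindep.measure_forall_mem_eq_lintegral hDm hZm (A := fun m d => Ici (d * c m))
      (fun m => measurableSet_le (measurable_fst.mul_const _) measurable_snd),
    lintegral_congr_ae ((ae_map_iff hDm.aemeasurable measurableSet_Ioi).2 (.of_forall hDpos)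
      |>.mono fun d hd => prod_measure_Ici_mul_eq_exp
        (fun m => map_measure_Ioi_eq_exp_of_tail (hZm m) (hexp m)) hc_pos hd),
    lintegral_map_ofReal_exp_neg_mul hDm (fun ω => (hDpos ω).le) hs, ← hφ _ hs,
    ENNReal.toReal_ofReal (hφ _ hs ▸ integral_nonneg fun ω => (Real.exp_pos _).le)]

/-- Kimberling construction, joint distribution: with `Z₁,…,Z_M` i.i.d. standard exponentials,
`D > 0` independent with Laplace transform `φ` (strictly decreasing and continuous with
`φ(0) = 1` and generalized inverse `φinv`), and `U_m := φ(Z_m / D)`, the joint distribution is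
the Archimedean copula: `Pr[U₁ ≤ u₁, …, U_M ≤ u_M] = φ(Σ_m φ⁻¹(u_m))`. -/
theorem kimberling_joint_archimedean
    {M : ℕ} {Ω : Type*} [MeasurableSpace Ω] (μ : Measure Ω) [IsProbabilityMeasure μ]
    (Z : Fin M → Ω → ℝ) (hZm : ∀ m, Measurable (Z m))
    (D : Ω → ℝ) (hDm : Measurable D) (hDpos : ∀ ω, 0 < D ω)
    (hindep : iIndepFun
      (Fin.cons D Z : Fin (M + 1) → Ω → ℝ) μ)
    (hexp : ∀ m, ∀ t : ℝ, 0 ≤ t → (μ {ω | t < Z m ω}).toReal = Real.exp (-t))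
    (φ : ℝ → ℝ) (hφ : ∀ t : ℝ, 0 ≤ t → φ t = ∫ ω, Real.exp (-(D ω * t)) ∂μ)
    (hφ0 : φ 0 = 1) (hφanti : StrictAntiOn φ (Set.Ici (0 : ℝ)))
    (hφcont : ContinuousOn φ (Set.Ici (0 : ℝ)))
    (φinv : ℝ → ℝ)
    (hφinv_nonneg : ∀ u ∈ Set.Ioo (0 : ℝ) 1, 0 ≤ φinv u)
    (hφinv : ∀ u ∈ Set.Ioo (0 : ℝ) 1, φ (φinv u) = u)
    (u : Fin M → ℝ) (hu : ∀ m, u m ∈ Set.Ioo (0 : ℝ) 1) :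
    (μ {ω | ∀ m : Fin M, φ (Z m ω / D ω) ≤ u m}).toReal
      = φ (∑ m, φinv (u m)) :=
  kimberling_joint_archimedean_general μ Z hZm D hDm hDpos hindep hexp φ hφ hφ0 hφanti φinv
    hφinv_nonneg hφinv u hu
end
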